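/- Let $E_1, E_2, \dots$ be events in a probability space. Suppose there exists $p > 0$ with $\mathbb{P}(E_i) \geq p$ for all $i$, and suppose $|\mathbb{P}(E_i \cap E_k) - \mathbb{P}(E_i)\mathbb{P}(E_k)| \leq 1/i^2$ for all $i < k$. Then $\mathbb{P}(\limsup_{n\to\infty} E_n) = 1$. -/

import Mathlib

/-!
By the Chung–Erdős inequality, `P(⋃_{i ∈ I} E i) ≥ S² / T` with `S = ∑_{i ∈ I} P(E i)` and
`T = ∑_{i, k ∈ I} P(E i ∩ E k)`. The summable correlation bound gives `T ≤ S² + c |I|`, while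
`S ≥ p |I|`, so the union of any `N` consecutive events has probability at least
`1 - c / (p² N)`. Letting `N → ∞`, every tail union `⋃_{k ≥ n} E k` has full measure, hence so
does their intersection `limsup E`.
-/

open MeasureTheory Filter Finset
open scoped ENNReal Topology

section

variable {Ω ι : Type*} [MeasurableSpace Ω]

theorem sq_lintegral_mul_le (μ : Measure Ω) {f g : Ω → ℝ≥0∞}
    (hf : AEMeasurable f μ) (hg : AEMeasurable g μ) :
    (∫⁻ ω, f ω * g ω ∂μ) ^ 2 ≤ (∫⁻ ω, f ω ^ 2 ∂μ) * ∫⁻ ω, g ω ^ 2 ∂μ := by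
  have h := ENNReal.lintegral_mul_le_Lp_mul_Lq μ .two_two hf hg
  calc (∫⁻ ω, f ω * g ω ∂μ) ^ 2
      ≤ ((∫⁻ ω, f ω ^ (2 : ℝ) ∂μ) ^ (1 / 2 : ℝ) * (∫⁻ ω, g ω ^ (2 : ℝ) ∂μ) ^ (1 / 2 : ℝ)) ^ 2 :=
        pow_le_pow_left₀ zero_le h 2
    _ = (∫⁻ ω, f ω ^ 2 ∂μ) * ∫⁻ ω, g ω ^ 2 ∂μ := by
        simp only [mul_pow, ← ENNReal.rpow_natCast, ← ENNReal.rpow_mul]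
        norm_num

/-- Cauchy–Schwarz for `∑ i ∈ I, 1_{E i}` against the indicator of the union, on which that sum
is supported. -/
theorem sq_sum_measure_le_measure_biUnion_mul (μ : Measure Ω) {E : ι → Set Ω}
    (hE : ∀ i, MeasurableSet (E i)) (I : Finset ι) :
    (∑ i ∈ I, μ (E i)) ^ 2 ≤ μ (⋃ i ∈ I, E i) * ∑ i ∈ I, ∑ k ∈ I, μ (E i ∩ E k) := by
  set U := ⋃ i ∈ I, E i
  have hU : MeasurableSet U := I.measurableSet_biUnion fun i _ ↦ hE i
  have h_mul (s t : Set Ω) (ω : Ω) :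
      s.indicator (1 : Ω → ℝ≥0∞) ω * t.indicator 1 ω = (s ∩ t).indicator 1 ω := by
    rw [Set.inter_indicator_one, Pi.mul_apply]
  have h_int {s : Finset ι} {F : ι → Set Ω} (hF : ∀ i, MeasurableSet (F i)) :
      ∫⁻ ω, ∑ i ∈ s, (F i).indicator 1 ω ∂μ = ∑ i ∈ s, μ (F i) := by
    rw [lintegral_finsetSum' _ fun i _ ↦ (measurable_one.indicator (hF i)).aemeasurable]
    simp [lintegral_indicator_one (hF _)]
  set f : Ω → ℝ≥0∞ := fun ω ↦ ∑ i ∈ I, (E i).indicator 1 ω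
  have hfU (ω : Ω) : f ω * U.indicator 1 ω = f ω := by
    simp only [f, sum_mul, h_mul]
    refine sum_congr rfl fun i hi ↦ ?_
    rw [Set.inter_eq_left.2 (subset_set_biUnion_of_mem hi)]
  have hf_sq (ω : Ω) : f ω ^ 2 = ∑ i ∈ I, ∑ k ∈ I, (E i ∩ E k).indicator 1 ω := by
    simp only [f, sq, sum_mul_sum, h_mul]
  have hf : AEMeasurable f μ :=
    aemeasurable_fun_sum _ fun i _ ↦ (measurable_one.indicator (hE i)).aemeasurable
  calc (∑ i ∈ I, μ (E i)) ^ 2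
    _ = (∫⁻ ω, f ω * U.indicator 1 ω ∂μ) ^ 2 := by simp only [hfU, f, h_int hE]
    _ ≤ (∫⁻ ω, f ω ^ 2 ∂μ) * ∫⁻ ω, U.indicator 1 ω ^ 2 ∂μ :=
      sq_lintegral_mul_le μ hf (measurable_one.indicator hU).aemeasurable
    _ = μ U * ∑ i ∈ I, ∑ k ∈ I, μ (E i ∩ E k) := by
      simp only [hf_sq, sq, h_mul, Set.inter_self, lintegral_indicator_one hU]
      rw [lintegral_finsetSum' _ fun i _ ↦ aemeasurable_fun_sum _ fun k _ ↦
        (measurable_one.indicator ((hE i).inter (hE k))).aemeasurable, mul_comm]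
      simp only [h_int fun k ↦ (hE _).inter (hE k)]

variable {μ : Measure Ω}

theorem sq_sum_measureReal_le_measureReal_biUnion_mul [IsFiniteMeasure μ] {E : ι → Set Ω}
    (hE : ∀ i, MeasurableSet (E i)) (I : Finset ι) :
    (∑ i ∈ I, μ.real (E i)) ^ 2 ≤ μ.real (⋃ i ∈ I, E i) * ∑ i ∈ I, ∑ k ∈ I, μ.real (E i ∩ E k) := by
  have h := ENNReal.toReal_mono (by simp [ENNReal.mul_eq_top])
    (sq_sum_measure_le_measure_biUnion_mul μ hE I)
  simpa [ENNReal.toReal_sum, measureReal_def] using h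

theorem one_sub_div_le_measureReal_biUnion [IsProbabilityMeasure μ] {E : ι → Set Ω}
    (hE : ∀ i, MeasurableSet (E i)) {I : Finset ι} (hI : I.Nonempty) {p c : ℝ} (hp : 0 < p)
    (hlow : ∀ i ∈ I, p ≤ μ.real (E i))
    (hsecond : ∑ i ∈ I, ∑ k ∈ I, μ.real (E i ∩ E k) ≤ (∑ i ∈ I, μ.real (E i)) ^ 2 + c * #I) :
    1 - c / p ^ 2 / #I ≤ μ.real (⋃ i ∈ I, E i) := by
  set S := ∑ i ∈ I, μ.real (E i)
  set T := ∑ i ∈ I, ∑ k ∈ I, μ.real (E i ∩ E k)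
  set u := μ.real (⋃ i ∈ I, E i)
  set N : ℝ := (#I : ℝ)
  have hN : 0 < N := by simpa [N] using hI.card_pos
  have hS : p * N ≤ S := by simpa [N, mul_comm] using card_nsmul_le_sum I _ p hlow
  have hT : 0 ≤ T := sum_nonneg fun i _ ↦ sum_nonneg fun k _ ↦ measureReal_nonneg
  have hu : u ≤ 1 := measureReal_le_one
  have hCE : S ^ 2 ≤ u * T := sq_sum_measureReal_le_measureReal_biUnion_mul hE I
  have hu0 : 0 ≤ u := measureReal_nonneg
  have hc : 0 ≤ c * N := by nlinarith
  have hgap : (1 - u) * S ^ 2 ≤ c * N := by nlinarith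
  have hgap' : (1 - u) * (p ^ 2 * N) * N ≤ c * N := calc
    (1 - u) * (p ^ 2 * N) * N = (1 - u) * (p * N) ^ 2 := by ring
    _ ≤ (1 - u) * S ^ 2 := by gcongr
    _ ≤ c * N := hgap
  rw [sub_le_comm, div_div, le_div_iff₀ (by positivity)]
  exact le_of_mul_le_mul_right hgap' hN

section ProbabilityMeasure

variable [IsProbabilityMeasure μ] {E : ℕ → Set Ω}

theorem measureReal_inter_le_mul_add {a : ℕ → ℝ} (ha : ∀ i, 0 ≤ a i)
    (hcorr : ∀ i k, i < k → |μ.real (E i ∩ E k) - μ.real (E i) * μ.real (E k)| ≤ a i)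
    (i k : ℕ) :
    μ.real (E i ∩ E k) ≤ μ.real (E i) * μ.real (E k) + (a i + a k) + if i = k then 1 else 0 := by
  rcases lt_trichotomy i k with hik | rfl | hki
  · have := (abs_le.1 (hcorr i k hik)).2
    simp only [hik.ne, if_false]
    linarith [ha k]
  · simp only [if_true, Set.inter_self]
    nlinarith [measureReal_le_one (μ := μ) (s := E i), ha i]
  · have := (abs_le.1 (hcorr k i hki)).2
    rw [Set.inter_comm, mul_comm]
    simp only [hki.ne', if_false]
    linarith [ha i]

theorem sum_sum_measureReal_inter_le {a : ℕ → ℝ} (ha : ∀ i, 0 ≤ a i) (hsum : Summable a)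
    (hcorr : ∀ i k, i < k → |μ.real (E i ∩ E k) - μ.real (E i) * μ.real (E k)| ≤ a i)
    (I : Finset ℕ) :
    ∑ i ∈ I, ∑ k ∈ I, μ.real (E i ∩ E k) ≤
      (∑ i ∈ I, μ.real (E i)) ^ 2 + (2 * ∑' i, a i + 1) * #I := by
  have hA : ∑ i ∈ I, a i ≤ ∑' i, a i := hsum.sum_le_tsum I fun i _ ↦ ha i
  calc ∑ i ∈ I, ∑ k ∈ I, μ.real (E i ∩ E k)
    _ ≤ ∑ i ∈ I, ∑ k ∈ I,
          (μ.real (E i) * μ.real (E k) + (a i + a k) + if i = k then 1 else 0) :=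
      sum_le_sum fun i _ ↦ sum_le_sum fun k _ ↦ measureReal_inter_le_mul_add ha hcorr i k
    _ = (∑ i ∈ I, μ.real (E i)) ^ 2 + (2 * ∑ i ∈ I, a i + 1) * #I := by
      simp only [sum_add_distrib, ← mul_sum, sum_const, nsmul_eq_mul, sum_ite_eq, sum_ite_mem,
        inter_self, mul_one, sq, sum_mul_sum]
      ring
    _ ≤ (∑ i ∈ I, μ.real (E i)) ^ 2 + (2 * ∑' i, a i + 1) * #I := by gcongr

theorem measure_biUnion_ge_eq_one (hE : ∀ i, MeasurableSet (E i)) {p c : ℝ} (hp : 0 < p)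
    (hlow : ∀ i, p ≤ μ.real (E i))
    (hsecond : ∀ I : Finset ℕ,
      ∑ i ∈ I, ∑ k ∈ I, μ.real (E i ∩ E k) ≤ (∑ i ∈ I, μ.real (E i)) ^ 2 + c * #I)
    (n : ℕ) :
    μ (⋃ k ≥ n, E k) = 1 := by
  have hbound (m : ℕ) : 1 - c / p ^ 2 / (m + 1 : ℕ) ≤ μ.real (⋃ k ≥ n, E k) := by
    have hcard : #(Icc n (n + m)) = m + 1 := by simp only [Nat.card_Icc]; omega
    have hsub : ⋃ i ∈ Icc n (n + m), E i ⊆ ⋃ k ≥ n, E k :=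
      Set.biUnion_mono (fun i hi ↦ (mem_Icc.1 hi).1) fun _ _ ↦ subset_rfl
    have := one_sub_div_le_measureReal_biUnion hE (nonempty_Icc.2 (n.le_add_right m)) hp
      (fun i _ ↦ hlow i) (hsecond _)
    rw [hcard] at this
    exact this.trans (measureReal_mono hsub (measure_ne_top _ _))
  have hlim : Tendsto (fun m : ℕ ↦ 1 - c / p ^ 2 / (m + 1 : ℕ)) atTop (𝓝 1) := by
    simpa using tendsto_const_nhds.sub
      ((tendsto_add_atTop_iff_nat 1).2 (tendsto_const_div_atTop_nhds_zero_nat (c / p ^ 2)))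
  rw [← ENNReal.toReal_eq_one_iff]
  exact le_antisymm measureReal_le_one (le_of_tendsto' hlim hbound)

theorem measure_limsup_eq_one_of_measure_biUnion_ge (hE : ∀ i, MeasurableSet (E i))
    (h : ∀ n, μ (⋃ k ≥ n, E k) = 1) :
    μ (limsup E atTop) = 1 := by
  have h_ae (n : ℕ) : ⋃ k ≥ n, E k =ᵐ[μ] (Set.univ : Set Ω) := by
    have hm : MeasurableSet (⋃ k ≥ n, E k) := .iUnion fun k ↦ .iUnion fun _ ↦ hE k
    rw [ae_eq_univ_iff_measure_eq hm.nullMeasurableSet, h n, measure_univ]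
  rw [limsup_eq_iInf_iSup_of_nat]
  simp only [Set.iInf_eq_iInter, Set.iSup_eq_iUnion]
  rw [measure_congr (Filter.EventuallyEq.countable_iInter h_ae), Set.iInter_const, measure_univ]

end ProbabilityMeasure

end

/-- If the events have probabilities uniformly bounded below by `p > 0` and the
correlations satisfy `|P(E i ∩ E k) - P(E i)P(E k)| ≤ 1/i²` for `i < k`, then
almost surely infinitely many of the events occur. -/
theorem borel_cantelli_correlation {Ω : Type*} [MeasurableSpace Ω]
    (μ : Measure Ω) [IsProbabilityMeasure μ]
    (E : ℕ → Set Ω) (hE : ∀ j, MeasurableSet (E j))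
    (p : ℝ) (hp : 0 < p) (hlow : ∀ i, p ≤ (μ (E i)).toReal)
    (hcorr : ∀ i k : ℕ, i < k →
      |(μ (E i ∩ E k)).toReal - (μ (E i)).toReal * (μ (E k)).toReal| ≤ 1 / (i + 1 : ℝ) ^ 2) :
    μ (limsup E atTop) = 1 := by
  have hsum : Summable fun i : ℕ ↦ 1 / (i + 1 : ℝ) ^ 2 := by
    simpa using (summable_nat_add_iff 1).2 (Real.summable_one_div_nat_pow.2 one_lt_two)
  exact measure_limsup_eq_one_of_measure_biUnion_ge hE fun n ↦
    measure_biUnion_ge_eq_one hE hp hlow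
      (sum_sum_measureReal_inter_le (fun i ↦ by positivity) hsum hcorr) n
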